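/- arXiv:2511.05230 — 3 statements merged into one kernel-verified Lean document; each statement's English description precedes it below -/
import Mathlib

section
/- Let μ₂ be a measure on ℝ³ assigning finite mass to every set pq (lines crossing segment from p to q), such that μ₂ assigns zero mass to the set of lines passing through any fixed point. Then for all a,b in ℝ², μ₂(oa ∩ ob) = ½(μ₂(oa) + μ₂(ob) − μ₂(ab)), where o is the origin of ℝ². -/
/-!
A line `ℓ(x,v)` is the zero set of the affine function `p ↦ p.1 - x - v p.2`, so it meets the
segment `pq` iff this function has opposite (weak) signs at `p` and `q`. For a line missing `o`,
`a` and `b`, the signs at `a` and `b` differ iff exactly one of them differs from the sign at `o`;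
hence `ab` and the symmetric difference `oa ∆ ob` agree up to the `μ₂`-null sets of lines through
`o`, `a`, `b`, and inclusion–exclusion gives the formula.
-/

open Set MeasureTheory

noncomputable section

/-- The line `ℓ(x,v) = {(x+vt, t) : t ∈ ℝ}` in the space-time plane. -/
def lineSet (x v : ℝ) : Set (ℝ × ℝ) := {p | p.1 = x + v * p.2}

/-- The set `pq ⊆ ℝ³` of `(x,v,r)` whose line `ℓ(x,v)` meets segment `pq`. -/
def cross3 (p q : ℝ × ℝ) : Set (ℝ × ℝ × ℝ) :=
  {z | (lineSet z.1 z.2.1 ∩ segment ℝ p q).Nonempty}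

/-- The set of `(x,v,r)` whose line passes through the point `p`. -/
def through3 (p : ℝ × ℝ) : Set (ℝ × ℝ × ℝ) := {z | p ∈ lineSet z.1 z.2.1}

open scoped symmDiff

theorem AffineMap.zero_mem_image_segment_iff {𝕜 E : Type*} [Field 𝕜] [LinearOrder 𝕜]
    [IsStrictOrderedRing 𝕜] [AddCommGroup E] [Module 𝕜 E] (f : E →ᵃ[𝕜] 𝕜) (p q : E) :
    0 ∈ f '' segment 𝕜 p q ↔ f p * f q ≤ 0 := by
  rw [image_segment, segment_eq_uIcc, mem_uIcc, mul_nonpos_iff]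
  tauto

theorem mul_nonpos_iff_xor {R : Type*} [Ring R] [LinearOrder R] [IsStrictOrderedRing R]
    {x y z : R} (hx : x ≠ 0) (hy : y ≠ 0) (hz : z ≠ 0) :
    y * z ≤ 0 ↔ Xor (x * y ≤ 0) (x * z ≤ 0) := by
  rcases hx.lt_or_gt with hx | hx <;> rcases hy.lt_or_gt with hy | hy <;>
    rcases hz.lt_or_gt with hz | hz <;>
    simp [Xor, mul_nonpos_iff, hx.le, hx.not_ge, hy.le, hy.not_ge, hz.le, hz.not_ge]

theorem MeasureTheory.measureReal_symmDiff_eq_add_sub_inter {α : Type*} [MeasurableSpace α]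
    {μ : Measure α} {s t : Set α} (hs : MeasurableSet s) (ht : MeasurableSet t)
    (h₁ : μ s ≠ ⊤) (h₂ : μ t ≠ ⊤) :
    μ.real (s ∆ t) = μ.real s + μ.real t - 2 * μ.real (s ∩ t) := by
  have hst := measureReal_inter_add_sdiff (μ := μ) ht h₁
  have hts := measureReal_inter_add_sdiff (μ := μ) hs h₂
  rw [inter_comm] at hts
  rw [measureReal_symmDiff_eq hs ht h₁ h₂]
  linarith

def lineEquation (x v : ℝ) : ℝ × ℝ →ᵃ[ℝ] ℝ where
  toFun p := p.1 - x - v * p.2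
  linear := LinearMap.fst ℝ ℝ ℝ - v • LinearMap.snd ℝ ℝ ℝ
  map_vadd' p w := by
    simp only [vadd_eq_add, Prod.fst_add, Prod.snd_add, LinearMap.sub_apply, LinearMap.fst_apply,
      LinearMap.smul_apply, LinearMap.snd_apply, smul_eq_mul]
    ring

@[simp] theorem lineEquation_apply (x v : ℝ) (p : ℝ × ℝ) :
    lineEquation x v p = p.1 - x - v * p.2 := rfl

theorem mem_lineSet_iff {x v : ℝ} {p : ℝ × ℝ} : p ∈ lineSet x v ↔ lineEquation x v p = 0 := by
  simp only [lineSet, mem_ofPred_eq, lineEquation_apply]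
  constructor <;> intro h <;> linarith

theorem mem_through3_iff {z : ℝ × ℝ × ℝ} {p : ℝ × ℝ} :
    z ∈ through3 p ↔ lineEquation z.1 z.2.1 p = 0 :=
  mem_lineSet_iff

theorem mem_cross3_iff {z : ℝ × ℝ × ℝ} {p q : ℝ × ℝ} :
    z ∈ cross3 p q ↔ lineEquation z.1 z.2.1 p * lineEquation z.1 z.2.1 q ≤ 0 := by
  rw [← AffineMap.zero_mem_image_segment_iff]
  simp only [cross3, Set.Nonempty, mem_ofPred_eq, mem_inter_iff, mem_lineSet_iff, mem_image]
  tauto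

theorem measurableSet_cross3 (p q : ℝ × ℝ) : MeasurableSet (cross3 p q) := by
  have h : cross3 p q = {z | lineEquation z.1 z.2.1 p * lineEquation z.1 z.2.1 q ≤ 0} :=
    Set.ext fun _ => mem_cross3_iff
  rw [h]
  exact measurableSet_le (by simp only [lineEquation_apply]; fun_prop) measurable_const

theorem mem_cross3_iff_mem_symmDiff {z : ℝ × ℝ × ℝ} {o a b : ℝ × ℝ} (ho : z ∉ through3 o)
    (ha : z ∉ through3 a) (hb : z ∉ through3 b) :
    z ∈ cross3 a b ↔ z ∈ cross3 o a ∆ cross3 o b := by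
  rw [mem_through3_iff] at ho ha hb
  rw [mem_symmDiff, mem_cross3_iff, mem_cross3_iff, mem_cross3_iff, mul_nonpos_iff_xor ho ha hb]
  rfl

theorem cross3_ae_eq_symmDiff {ν : Measure (ℝ × ℝ × ℝ)} (hnull : ∀ p, ν (through3 p) = 0)
    (o a b : ℝ × ℝ) : cross3 a b =ᵐ[ν] cross3 o a ∆ cross3 o b := by
  filter_upwards [measure_eq_zero_iff_ae_notMem.1 (hnull o),
    measure_eq_zero_iff_ae_notMem.1 (hnull a), measure_eq_zero_iff_ae_notMem.1 (hnull b)]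
    with z ho ha hb
  exact propext (mem_cross3_iff_mem_symmDiff ho ha hb)

/-- `μ₂(oa ∩ ob) = ½(μ₂(oa) + μ₂(ob) − μ₂(ab))`, for a measure finite on
all sets `pq` and null on lines through any fixed point; `o` is the origin. -/
theorem statement3 (ν : Measure (ℝ × ℝ × ℝ))
    (hfin : ∀ p q : ℝ × ℝ, ν (cross3 p q) < ⊤)
    (hnull : ∀ p : ℝ × ℝ, ν (through3 p) = 0) :
    ∀ a b : ℝ × ℝ,
      (ν (cross3 0 a ∩ cross3 0 b)).toReal =
        (1 / 2) * ((ν (cross3 0 a)).toReal + (ν (cross3 0 b)).toReal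
          - (ν (cross3 a b)).toReal) := by
  intro a b
  have hab : ν.real (cross3 a b) = ν.real (cross3 0 a ∆ cross3 0 b) :=
    measureReal_congr (cross3_ae_eq_symmDiff hnull 0 a b)
  rw [measureReal_symmDiff_eq_add_sub_inter (measurableSet_cross3 0 a)
    (measurableSet_cross3 0 b) (hfin 0 a).ne (hfin 0 b).ne] at hab
  simp only [measureReal_def] at hab
  linarith

end
end

section
/- Let μ ∈ 𝓜, i.e., a measure on ℝ³ with μ(ab) + μ₂(ab) < ∞ for all a,b ∈ ℝ², and define H_μ(b) := μ₁(ob₊) − μ₁(ob₋) where dμ₁(x,v,r) = r dμ(x,v,r). Then for all a, b ∈ ℝ², H_μ(b) − H_μ(a) = μ₁(ab₊) − μ₁(ab₋). -/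
open Set MeasureTheory

noncomputable section

/-- Open left half-plane of the line `ℓ(x,v)`. -/
def lef (x v : ℝ) : Set (ℝ × ℝ) := {p | p.1 < x + v * p.2}

/-- Closed right half-plane of the line `ℓ(x,v)`. -/
def rig (x v : ℝ) : Set (ℝ × ℝ) := {p | x + v * p.2 ≤ p.1}

/-- The set `pq₊ ⊆ ℝ³`: `p` in the open left half-plane, `q` in the closed right one. -/
def crossP3 (p q : ℝ × ℝ) : Set (ℝ × ℝ × ℝ) :=
  {z | p ∈ lef z.1 z.2.1 ∧ q ∈ rig z.1 z.2.1}

/-- The set `pq₋ ⊆ ℝ³`: `q` in the open left half-plane, `p` in the closed right one. -/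
def crossM3 (p q : ℝ × ℝ) : Set (ℝ × ℝ × ℝ) :=
  {z | p ∈ rig z.1 z.2.1 ∧ q ∈ lef z.1 z.2.1}

/-- The measure `μ₁` with density `r` with respect to `μ`. -/
def mu1 (μ : Measure (ℝ × ℝ × ℝ)) : Measure (ℝ × ℝ × ℝ) :=
  μ.withDensity (fun z => ENNReal.ofReal z.2.2)

/-- The measure `μ₂` with density `r²` with respect to `μ`. -/
def mu2 (μ : Measure (ℝ × ℝ × ℝ)) : Measure (ℝ × ℝ × ℝ) :=
  μ.withDensity (fun z => ENNReal.ofReal (z.2.2 ^ 2))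

/-- The multitime field `H_μ(b) = μ₁(ob₊) − μ₁(ob₋)`; `o` is the origin. -/
def Hfield (μ : Measure (ℝ × ℝ × ℝ)) (b : ℝ × ℝ) : ℝ :=
  (mu1 μ (crossP3 0 b)).toReal - (mu1 μ (crossM3 0 b)).toReal

/-!
With `leftSet p` the set of lines `(x, v, r)` having `p` in their open left half-plane, `pq₊` and
`pq₋` are the two differences of `leftSet p` and `leftSet q`, so
`𝟙 pq₊ - 𝟙 pq₋ = 𝟙 (leftSet p) - 𝟙 (leftSet q)` pointwise, and these differences telescope along
`o → b`, `o → a`, `a → b`. Integrating against `μ₁` is legitimate because `r ≤ 1 + r²` bounds `μ₁`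
by `μ + μ₂`, which is finite on each `pq ⊇ pq₊ ∪ pq₋`.
-/

open ENNReal

section Telescope

variable {X : Type*} [MeasurableSpace X] (ν : Measure X) {O A B : Set X}

theorem measure_diff_add_measure_diff_add_measure_diff_swap
    (hO : MeasurableSet O) (hA : MeasurableSet A) (hB : MeasurableSet B) :
    ν (O \ B) + ν (A \ O) + ν (B \ A) = ν (B \ O) + ν (O \ A) + ν (A \ B) := by
  have sum_eq {S T U : Set X} (hS : MeasurableSet S) (hT : MeasurableSet T)
      (hU : MeasurableSet U) : ν S + ν T + ν U =
        ∫⁻ z, (S.indicator 1 z + T.indicator 1 z + U.indicator 1 z : ℝ≥0∞) ∂ν := by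
    have hST : Measurable fun z => (S.indicator 1 z + T.indicator 1 z : ℝ≥0∞) :=
      (measurable_one.indicator hS).add (measurable_one.indicator hT)
    rw [lintegral_add_left hST,
      lintegral_add_left (measurable_one.indicator hS), lintegral_indicator_one hS,
      lintegral_indicator_one hT, lintegral_indicator_one hU]
  rw [sum_eq (hO.diff hB) (hA.diff hO) (hB.diff hA), sum_eq (hB.diff hO) (hO.diff hA) (hA.diff hB)]
  refine lintegral_congr fun z => ?_
  by_cases hzO : z ∈ O <;> by_cases hzA : z ∈ A <;> by_cases hzB : z ∈ B <;>
    simp [hzO, hzA, hzB]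

theorem toReal_measure_diff_sub_telescope
    (hO : MeasurableSet O) (hA : MeasurableSet A) (hB : MeasurableSet B)
    (hOB : ν (O \ B) ≠ ⊤) (hBO : ν (B \ O) ≠ ⊤) (hOA : ν (O \ A) ≠ ⊤) (hAO : ν (A \ O) ≠ ⊤)
    (hAB : ν (A \ B) ≠ ⊤) (hBA : ν (B \ A) ≠ ⊤) :
    (ν (O \ B)).toReal - (ν (B \ O)).toReal - ((ν (O \ A)).toReal - (ν (A \ O)).toReal) =
      (ν (A \ B)).toReal - (ν (B \ A)).toReal := by
  have h := congrArg ENNReal.toReal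
    (measure_diff_add_measure_diff_add_measure_diff_swap ν hO hA hB)
  rw [toReal_add (add_ne_top.2 ⟨hOB, hAO⟩) hBA, toReal_add hOB hAO,
    toReal_add (add_ne_top.2 ⟨hBO, hOA⟩) hAB, toReal_add hBO hOA] at h
  linarith

end Telescope

theorem ofReal_le_one_add_ofReal_sq (r : ℝ) : ENNReal.ofReal r ≤ 1 + ENNReal.ofReal (r ^ 2) := by
  rw [← ofReal_one, ← ofReal_add zero_le_one (sq_nonneg r)]
  exact ofReal_le_ofReal (by nlinarith [sq_nonneg (r - 1)])

theorem withDensity_ofReal_le_add_withDensity_ofReal_sq {α : Type*} [MeasurableSpace α]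
    (μ : Measure α) (f : α → ℝ) :
    μ.withDensity (fun x => ENNReal.ofReal (f x)) ≤
      μ + μ.withDensity (fun x => ENNReal.ofReal (f x ^ 2)) :=
  calc μ.withDensity (fun x => ENNReal.ofReal (f x))
      ≤ μ.withDensity ((fun _ => 1) + fun x => ENNReal.ofReal (f x ^ 2)) :=
        withDensity_mono (Filter.Eventually.of_forall fun x => ofReal_le_one_add_ofReal_sq (f x))
    _ = μ + μ.withDensity (fun x => ENNReal.ofReal (f x ^ 2)) := by
        rw [withDensity_add_left measurable_const, ← Pi.one_def, withDensity_one]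

def leftSet (p : ℝ × ℝ) : Set (ℝ × ℝ × ℝ) := {z | p ∈ lef z.1 z.2.1}

theorem measurableSet_leftSet (p : ℝ × ℝ) : MeasurableSet (leftSet p) :=
  measurableSet_lt (f := fun _ => p.1) measurable_const (by fun_prop)

theorem crossP3_eq_diff (p q : ℝ × ℝ) : crossP3 p q = leftSet p \ leftSet q := by
  ext z
  simp [crossP3, leftSet, lef, rig]

theorem crossM3_eq_diff (p q : ℝ × ℝ) : crossM3 p q = leftSet q \ leftSet p := by
  ext z
  simp [crossM3, leftSet, lef, rig, and_comm]

theorem crossP3_subset_cross3 (p q : ℝ × ℝ) : crossP3 p q ⊆ cross3 p q := by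
  rintro ⟨x, v, r⟩ ⟨hp, hq⟩
  simp only [lef, rig, mem_ofPred_eq] at hp hq
  set dp := x + v * p.2 - p.1
  set dq := x + v * q.2 - q.1
  have hdp : 0 < dp := by linarith
  have hden : 0 < dp - dq := by linarith
  -- `t` is where the signed offset `s ↦ (1 - s) dp + s dq` of the segment point vanishes
  set t := dp / (dp - dq)
  have ht : t * (dp - dq) = dp := div_mul_cancel₀ _ hden.ne'
  have ht1 : t ≤ 1 := (div_le_one hden).2 (by linarith)
  refine ⟨(1 - t) • p + t • q, ?_, 1 - t, t, by linarith, (div_pos hdp hden).le, by ring, rfl⟩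
  show ((1 - t) • p + t • q).1 = x + v * ((1 - t) • p + t • q).2
  simp only [Prod.fst_add, Prod.snd_add, Prod.smul_fst, Prod.smul_snd, smul_eq_mul]
  linear_combination ht

theorem crossM3_subset_cross3 (p q : ℝ × ℝ) : crossM3 p q ⊆ cross3 p q := by
  have hswap : crossM3 p q = crossP3 q p := by
    rw [crossM3_eq_diff, crossP3_eq_diff]
  rw [hswap, cross3, ← segment_symm]
  exact crossP3_subset_cross3 q p

theorem mu1_ne_top_of_subset_cross3 {μ : Measure (ℝ × ℝ × ℝ)}
    (hM : ∀ a b : ℝ × ℝ, μ (cross3 a b) + mu2 μ (cross3 a b) < ⊤)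
    {p q : ℝ × ℝ} {S : Set (ℝ × ℝ × ℝ)} (hS : S ⊆ cross3 p q) : mu1 μ S ≠ ⊤ :=
  ne_of_lt <| calc mu1 μ S ≤ mu1 μ (cross3 p q) := measure_mono hS
    _ ≤ μ (cross3 p q) + mu2 μ (cross3 p q) :=
        withDensity_ofReal_le_add_withDensity_ofReal_sq μ (fun z => z.2.2) _
    _ < ⊤ := hM p q

/-- for `μ ∈ 𝓜`, the surface differences satisfy
`H_μ(b) − H_μ(a) = μ₁(ab₊) − μ₁(ab₋)`. -/
theorem statement7 (μ : Measure (ℝ × ℝ × ℝ))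
    (hM : ∀ a b : ℝ × ℝ, μ (cross3 a b) + mu2 μ (cross3 a b) < ⊤) :
    ∀ a b : ℝ × ℝ,
      Hfield μ b - Hfield μ a =
        (mu1 μ (crossP3 a b)).toReal - (mu1 μ (crossM3 a b)).toReal := by
  intro a b
  have finP p q : mu1 μ (leftSet p \ leftSet q) ≠ ⊤ :=
    mu1_ne_top_of_subset_cross3 hM ((crossP3_eq_diff p q).symm ▸ crossP3_subset_cross3 p q)
  have finM p q : mu1 μ (leftSet q \ leftSet p) ≠ ⊤ :=
    mu1_ne_top_of_subset_cross3 hM ((crossM3_eq_diff p q).symm ▸ crossM3_subset_cross3 p q)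
  simp only [Hfield, crossP3_eq_diff, crossM3_eq_diff]
  exact toReal_measure_diff_sub_telescope _ (measurableSet_leftSet 0) (measurableSet_leftSet a)
    (measurableSet_leftSet b) (finP 0 b) (finM 0 b) (finP 0 a) (finM 0 a) (finP a b) (finM a b)

end
end

section
/- Let X ⊂ ℝ³ be a configuration with empirical measure N ∈ 𝓜, H_N the associated multitime walk field, and define the flow j_N(x,v;t) := Σ_{(x̃,ṽ,r̃)∈X} r̃ (1{x̃ > x, x̃ + tṽ < x + vt} − 1{x̃ < x, x̃ + tṽ > x + vt}). Then j_N(x,v;t) = H_N(x+vt, t) − H_N(x, 0) for all (x,v) ∈ ℝ² and t ∈ ℝ, assuming no point of X lies on the line ℓ(x,v) nor on the time-zero axis position x. -/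
open Set

noncomputable section

/-- The multitime walk field `H_N(b) = N₁(ob₊) − N₁(ob₋)` of a finite configuration. -/
def HN (X : Finset (ℝ × ℝ × ℝ)) (b : ℝ × ℝ) : ℝ :=
  ∑ z ∈ X, z.2.2 * (Set.indicator (crossP3 0 b) (fun _ => (1 : ℝ)) z
    - Set.indicator (crossM3 0 b) (fun _ => (1 : ℝ)) z)

/-- The signed length flow along the line `ℓ(x,v)` up to time `t`. -/
def jflow (X : Finset (ℝ × ℝ × ℝ)) (x v t : ℝ) : ℝ :=
  ∑ z ∈ X, z.2.2 *
    ((if x < z.1 ∧ z.1 + t * z.2.1 < x + v * t then (1 : ℝ) else 0)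
      - (if z.1 < x ∧ x + v * t < z.1 + t * z.2.1 then (1 : ℝ) else 0))

/-- the flow equals the surface increment:
`j_N(x,v;t) = H_N(x+vt, t) − H_N(x, 0)`, provided no point of `X` lies on the line
`ℓ(x,v)` nor at the time-zero position `x`. -/
theorem statement13 (X : Finset (ℝ × ℝ × ℝ)) (x v t : ℝ)
    (hx : ∀ z ∈ X, z.1 ≠ x)
    (hline : ∀ z ∈ X, ((x + v * t, t) : ℝ × ℝ) ∉ lineSet z.1 z.2.1) :
    jflow X x v t = HN X (x + v * t, t) - HN X (x, 0) := by
  unfold jflow HN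
  rw [← Finset.sum_sub_distrib]
  apply Finset.sum_congr rfl
  intro z hz
  have h1 : z.1 ≠ x := hx z hz
  have h2 : ¬ (x + v * t = z.1 + z.2.1 * t) := hline z hz
  simp only [crossP3, crossM3, lef, rig, Set.indicator, Set.mem_setOf_eq,
    Prod.fst_zero, Prod.snd_zero, mul_zero, add_zero]
  rw [← mul_sub]
  congr 1
  simp only [mul_comm t z.2.1]
  rcases lt_or_gt_of_ne h1 with ha | ha <;>
    rcases lt_or_gt_of_ne h2 with hc | hc <;>
    rcases le_or_gt z.1 0 with hb | hb <;>
    [skip; skip; skip; skip; skip; skip; skip; skip] <;>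
    (first
      | (simp only [ha, hc, hb, ha.le, hc.le, ha.not_gt, hc.not_gt, ha.not_ge, hc.not_ge,
          hb.not_gt, and_true, true_and, and_false, false_and, if_true, if_false])
      | (simp only [ha, hc, hb, ha.le, hc.le, ha.not_gt, hc.not_gt, ha.not_ge, hc.not_ge,
          hb.not_ge, and_true, true_and, and_false, false_and, if_true, if_false])) <;>
    (try rw [if_neg hb.not_ge]) <;>
    (try rw [if_pos hb]) <;>
    first
      | linarith
      | norm_num

end
end
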